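/- arXiv:2306.16806 — 3 statements merged into one kernel-verified Lean document; each statement's English description precedes it below -/
import Mathlib

section
/- Let X be a directed space. The maps i : C(X) → C(X̃) sending a closed set A to the Scott closure of { cl_X{a} : a ∈ A } in X̃, and ⋃ : C(X̃) → C(X) sending a Scott closed family 𝒜 to its union, are mutually inverse order isomorphisms; hence the lattice of closed subsets of X is isomorphic to the lattice of Scott closed subsets of the dcpo X̃. -/
open Set

variable {X : Type*} [TopologicalSpace X]

/-- The specialization order of the paper: `x ⊑ y` iff `x ∈ cl {y}`. -/
def specLe (x y : X) : Prop := x ∈ closure {y}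

/-- A directed set `D` converges to `x` iff it meets every open neighborhood of `x`. -/
def DConv (D : Set X) (x : X) : Prop :=
  ∀ U : Set X, IsOpen U → x ∈ U → (D ∩ U).Nonempty

/-- `U` is directed-open. -/
def DirOpen (U : Set X) : Prop :=
  ∀ (D : Set X) (x : X), D.Nonempty → DirectedOn specLe D → DConv D x → x ∈ U →
    (D ∩ U).Nonempty

/-- `X̃` as a set: the least subfamily of `Γ(X)` (nonempty closed sets, ordered by
inclusion, with directed suprema given by closures of unions) containing all point
closures and closed under directed suprema, i.e. the d-closure of `Ψ(X)` in `Γ(X)`. -/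
def XtildeSet (X : Type*) [TopologicalSpace X] : Set (Set X) :=
  ⋂₀ {S : Set (Set X) | S ⊆ {A | IsClosed A ∧ A.Nonempty} ∧
      (∀ x : X, closure {x} ∈ S) ∧
      ∀ 𝒟 ⊆ S, 𝒟.Nonempty → DirectedOn (· ⊆ ·) 𝒟 → closure (⋃₀ 𝒟) ∈ S}

/-- The dcpo `X̃`, ordered by inclusion. -/
abbrev Xtilde (X : Type*) [TopologicalSpace X] := {A : Set X // A ∈ XtildeSet X}

/-- A Scott open subset of the dcpo `X̃`. -/
def ScottOpen (V : Set (Xtilde X)) : Prop :=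
  IsUpperSet V ∧ ∀ d : Set (Xtilde X), d.Nonempty → DirectedOn (· ≤ ·) d →
    ∀ a : Xtilde X, IsLUB d a → a ∈ V → (d ∩ V).Nonempty

/-- A Scott closed subset of the dcpo `X̃`. -/
def ScottClosed (F : Set (Xtilde X)) : Prop :=
  IsLowerSet F ∧ ∀ d ⊆ F, d.Nonempty → DirectedOn (· ≤ ·) d →
    ∀ a : Xtilde X, IsLUB d a → a ∈ F

/-- Scott closure in `X̃`. -/
def scCl (S : Set (Xtilde X)) : Set (Xtilde X) := ⋂₀ {F | ScottClosed F ∧ S ⊆ F}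

/-- The map `i : C(X) → C(X̃)`, sending a closed set `A` to the Scott closure of
`{ cl{a} : a ∈ A }` in `X̃`. -/
def iMap (A : Set X) : Set (Xtilde X) :=
  scCl {B : Xtilde X | ∃ a ∈ A, B.1 = closure {a}}

/-- The map `⋃ : C(X̃) → C(X)`. -/
def uMap (𝒜 : Set (Xtilde X)) : Set X := ⋃ B ∈ 𝒜, (B : Xtilde X).1


lemma closedNE_of_mem {A : Set X} (h : A ∈ XtildeSet X) : IsClosed A ∧ A.Nonempty := by
  refine h {A | IsClosed A ∧ A.Nonempty} ⟨subset_rfl, fun x => ⟨isClosed_closure, ⟨x, subset_closure rfl⟩⟩, ?_⟩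
  rintro 𝒟 h𝒟 ⟨D, hD⟩ -
  exact ⟨isClosed_closure, (h𝒟 hD).2.imp fun y hy => subset_closure ⟨D, hD, hy⟩⟩

lemma pc_mem (x : X) : closure {x} ∈ XtildeSet X :=
  fun _ hS => hS.2.1 x

lemma dsup_mem {𝒟 : Set (Set X)} (h : 𝒟 ⊆ XtildeSet X) (hne : 𝒟.Nonempty)
    (hdir : DirectedOn (· ⊆ ·) 𝒟) : closure (⋃₀ 𝒟) ∈ XtildeSet X :=
  fun S hS => hS.2.2 𝒟 (fun D hD => h hD S hS) hne hdir

lemma xtilde_induction (P : Set X → Prop)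
    (hpc : ∀ x : X, P (closure {x}))
    (hsup : ∀ 𝒟 ⊆ XtildeSet X ∩ {A | P A}, 𝒟.Nonempty → DirectedOn (· ⊆ ·) 𝒟 →
      P (closure (⋃₀ 𝒟))) :
    ∀ A ∈ XtildeSet X, P A := by
  intro A hA
  have : A ∈ XtildeSet X ∩ {A | P A} := by
    refine hA (XtildeSet X ∩ {A | P A}) ⟨?_, ?_, ?_⟩
    · exact fun B hB => closedNE_of_mem hB.1
    · exact fun x => ⟨pc_mem x, hpc x⟩
    · intro 𝒟 h𝒟 hne hdir
      exact ⟨dsup_mem (fun D hD => (h𝒟 hD).1) hne hdir, hsup 𝒟 h𝒟 hne hdir⟩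
  exact this.2

lemma isLUB_closure_sUnion {d : Set (Xtilde X)} (a : Xtilde X)
    (ha : a.1 = closure (⋃₀ (Subtype.val '' d))) : IsLUB d a := by
  constructor
  · intro B hB
    show B.1 ⊆ a.1
    rw [ha]
    exact (subset_sUnion_of_mem (show B.1 ∈ Subtype.val '' d from ⟨B, hB, rfl⟩)).trans subset_closure
  · intro C hC
    show a.1 ⊆ C.1
    rw [ha]
    refine closure_minimal ?_ (closedNE_of_mem C.2).1
    rintro x ⟨_, ⟨B, hB, rfl⟩, hx⟩
    exact hC hB hx

lemma scottClosed_scCl (S : Set (Xtilde X)) : ScottClosed (scCl S) := by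
  refine ⟨?_, ?_⟩
  · intro x y hxy hx F hF
    exact hF.1.1 hxy (hx F hF)
  · intro d hd hne hdir a ha F hF
    exact hF.1.2 d (fun B hB => hd hB F hF) hne hdir a ha

lemma subset_scCl (S : Set (Xtilde X)) : S ⊆ scCl S :=
  fun x hx F hF => hF.2 hx

lemma scCl_min {S F : Set (Xtilde X)} (hF : ScottClosed F) (h : S ⊆ F) : scCl S ⊆ F :=
  fun x hx => hx F ⟨hF, h⟩

lemma scCl_mono {S T : Set (Xtilde X)} (h : S ⊆ T) : scCl S ⊆ scCl T :=
  scCl_min (scottClosed_scCl T) (h.trans (subset_scCl T))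

lemma mem_iMap_self : ∀ A, ∀ h : A ∈ XtildeSet X, (⟨A, h⟩ : Xtilde X) ∈ iMap A := by
  intro A hA
  refine xtilde_induction (X := X)
    (fun B => ∀ h : B ∈ XtildeSet X, (⟨B, h⟩ : Xtilde X) ∈ iMap B) ?_ ?_ A hA hA
  · intro x h
    exact subset_scCl _ ⟨x, subset_closure rfl, rfl⟩
  · intro 𝒟 h𝒟 hne hdir h
    set A := closure (⋃₀ 𝒟) with hAdef
    set d : Set (Xtilde X) := {B : Xtilde X | B.1 ∈ 𝒟} with hddef
    have hval : Subtype.val '' d = 𝒟 := by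
      apply Subset.antisymm
      · rintro _ ⟨B, hB, rfl⟩; exact hB
      · intro D hD; exact ⟨⟨D, (h𝒟 hD).1⟩, hD, rfl⟩
    have hsub : ∀ D ∈ 𝒟, D ⊆ A := fun D hD =>
      (subset_sUnion_of_mem hD).trans subset_closure
    have hdsub : d ⊆ iMap A := by
      intro B hB
      have hP : (⟨B.1, (h𝒟 hB).1⟩ : Xtilde X) ∈ iMap B.1 := (h𝒟 hB).2 (h𝒟 hB).1
      have hBeq : (⟨B.1, (h𝒟 hB).1⟩ : Xtilde X) = B := Subtype.ext rfl
      rw [hBeq] at hP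
      refine scCl_mono ?_ hP
      rintro C ⟨a, haB, hC⟩
      exact ⟨a, hsub B.1 hB haB, hC⟩
    have hdne : d.Nonempty := by
      obtain ⟨D, hD⟩ := hne
      exact ⟨⟨D, (h𝒟 hD).1⟩, hD⟩
    have hddir : DirectedOn (· ≤ ·) d := by
      intro B hB C hC
      obtain ⟨E, hE, hBE, hCE⟩ := hdir B.1 hB C.1 hC
      exact ⟨⟨E, (h𝒟 hE).1⟩, hE, hBE, hCE⟩
    have hlub : IsLUB d (⟨A, h⟩ : Xtilde X) := by
      apply isLUB_closure_sUnion
      rw [hval]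
    exact (scottClosed_scCl _).2 d hdsub hdne hddir _ hlub

/-- For a directed space `X`, the maps `i` and `⋃` are well defined, mutually inverse and
order isomorphisms: the lattice of closed sets of `X` is isomorphic to the lattice of Scott
closed sets of `X̃`. -/
theorem stmt_13 [T0Space X] (hX : ∀ U : Set X, DirOpen U → IsOpen U) :
    (∀ A : Set X, IsClosed A → ScottClosed (iMap A)) ∧
    (∀ 𝒜 : Set (Xtilde X), ScottClosed 𝒜 → IsClosed (uMap 𝒜)) ∧
    (∀ A : Set X, IsClosed A → uMap (iMap A) = A) ∧
    (∀ 𝒜 : Set (Xtilde X), ScottClosed 𝒜 → iMap (uMap 𝒜) = 𝒜) ∧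
    (∀ A B : Set X, IsClosed A → IsClosed B → (iMap A ⊆ iMap B ↔ A ⊆ B)) := by
  -- uMap of Scott closed is closed
  have hu : ∀ 𝒜 : Set (Xtilde X), ScottClosed 𝒜 → IsClosed (uMap 𝒜) := by
    intro 𝒜 h𝒜
    rw [← isOpen_compl_iff]
    apply hX
    intro D x hne hdir hconv hx
    by_contra hcon
    have hDsub : D ⊆ uMap 𝒜 := by
      intro y hy
      by_contra hyn
      exact hcon ⟨y, hy, hyn⟩
    set d : Set (Xtilde X) := (fun y : X => (⟨closure {y}, pc_mem y⟩ : Xtilde X)) '' D with hd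
    have hdsub : d ⊆ 𝒜 := by
      rintro _ ⟨y, hy, rfl⟩
      obtain ⟨B, hB, hyB⟩ := mem_iUnion₂.1 (hDsub hy)
      refine h𝒜.1 ?_ hB
      show closure {y} ⊆ B.1
      exact closure_minimal (singleton_subset_iff.2 hyB) (closedNE_of_mem B.2).1
    have hdne : d.Nonempty := hne.image _
    have hddir : DirectedOn (· ≤ ·) d := by
      rintro _ ⟨y, hy, rfl⟩ _ ⟨z, hz, rfl⟩
      obtain ⟨w, hw, hyw, hzw⟩ := hdir y hy z hz
      refine ⟨⟨closure {w}, pc_mem w⟩, ⟨w, hw, rfl⟩, ?_, ?_⟩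
      · exact closure_minimal (singleton_subset_iff.2 hyw) isClosed_closure
      · exact closure_minimal (singleton_subset_iff.2 hzw) isClosed_closure
    have hmem : closure (⋃₀ (Subtype.val '' d)) ∈ XtildeSet X := by
      refine dsup_mem ?_ (hdne.image _) ?_
      · rintro _ ⟨B, _, rfl⟩; exact B.2
      · rintro _ ⟨B, hB, rfl⟩ _ ⟨C, hC, rfl⟩
        obtain ⟨E, hE, hBE, hCE⟩ := hddir B hB C hC
        exact ⟨E.1, ⟨E, hE, rfl⟩, hBE, hCE⟩
    have hlub : IsLUB d (⟨_, hmem⟩ : Xtilde X) := isLUB_closure_sUnion _ rfl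
    have hain : (⟨_, hmem⟩ : Xtilde X) ∈ 𝒜 := h𝒜.2 d hdsub hdne hddir _ hlub
    have hxcl : x ∈ closure (⋃₀ (Subtype.val '' d)) := by
      have hxD : x ∈ closure D := by
        rw [mem_closure_iff]
        intro o ho hxo
        obtain ⟨y, hy1, hy2⟩ := hconv o ho hxo
        exact ⟨y, hy2, hy1⟩
      refine closure_mono ?_ hxD
      intro y hy
      exact ⟨closure {y}, ⟨⟨closure {y}, pc_mem y⟩, ⟨y, hy, rfl⟩, rfl⟩, subset_closure rfl⟩
    exact hx (mem_iUnion₂.2 ⟨_, hain, hxcl⟩)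
  -- uMap (iMap A) = A
  have hui : ∀ A : Set X, IsClosed A → uMap (iMap A) = A := by
    intro A hA
    apply Subset.antisymm
    · have hF : iMap A ⊆ {B : Xtilde X | B.1 ⊆ A} := by
        refine scCl_min ⟨?_, ?_⟩ ?_
        · intro B C hCB hB
          exact Subset.trans hCB hB
        · intro d hd hne hdir a ha
          have hmem : closure (⋃₀ (Subtype.val '' d)) ∈ XtildeSet X := by
            refine dsup_mem ?_ (hne.image _) ?_
            · rintro _ ⟨B, _, rfl⟩; exact B.2
            · rintro _ ⟨B, hB, rfl⟩ _ ⟨C, hC, rfl⟩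
              obtain ⟨E, hE, hBE, hCE⟩ := hdir B hB C hC
              exact ⟨E.1, ⟨E, hE, rfl⟩, hBE, hCE⟩
          have := ha.unique (isLUB_closure_sUnion (⟨_, hmem⟩ : Xtilde X) rfl)
          rw [this]
          show closure (⋃₀ (Subtype.val '' d)) ⊆ A
          refine closure_minimal ?_ hA
          rintro x ⟨_, ⟨B, hB, rfl⟩, hx⟩
          exact hd hB hx
        · rintro B ⟨a, haA, hB⟩
          show B.1 ⊆ A
          rw [hB]
          exact closure_minimal (singleton_subset_iff.2 haA) hA
      intro x hx
      obtain ⟨B, hB, hxB⟩ := mem_iUnion₂.1 hx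
      exact hF hB hxB
    · intro a ha
      refine mem_iUnion₂.2 ⟨⟨closure {a}, pc_mem a⟩, ?_, subset_closure rfl⟩
      exact subset_scCl _ ⟨a, ha, rfl⟩
  -- iMap (uMap 𝒜) = 𝒜
  have hiu : ∀ 𝒜 : Set (Xtilde X), ScottClosed 𝒜 → iMap (uMap 𝒜) = 𝒜 := by
    intro 𝒜 h𝒜
    apply Subset.antisymm
    · refine scCl_min h𝒜 ?_
      rintro B ⟨a, ha, hB⟩
      obtain ⟨C, hC, haC⟩ := mem_iUnion₂.1 ha
      refine h𝒜.1 ?_ hC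
      show B.1 ⊆ C.1
      rw [hB]
      exact closure_minimal (singleton_subset_iff.2 haC) (closedNE_of_mem C.2).1
    · intro B hB
      have h1 : (⟨B.1, B.2⟩ : Xtilde X) ∈ iMap B.1 := mem_iMap_self B.1 B.2
      rw [Subtype.eta] at h1
      refine scCl_mono ?_ h1
      rintro C ⟨a, haB, hC⟩
      exact ⟨a, mem_iUnion₂.2 ⟨B, hB, haB⟩, hC⟩
  refine ⟨fun A _ => scottClosed_scCl _, hu, hui, hiu, ?_⟩
  intro A B hA hB
  constructor
  · intro h
    rw [← hui A hA, ← hui B hB]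
    intro x hx
    obtain ⟨C, hC, hxC⟩ := mem_iUnion₂.1 hx
    exact mem_iUnion₂.2 ⟨C, h hC, hxC⟩
  · intro h
    exact scCl_mono (fun C => fun ⟨a, haA, hC⟩ => ⟨a, h haA, hC⟩)
end

section
/- Let X be a directed space. Then the map η : X → X̃ defined by η(x) = cl{x} is a topological embedding of X into X̃ equipped with the Scott topology; moreover for every closed A ⊆ X, η(A) = η(X) ∩ cl_{X̃}(η(A)). -/
open Set Topology

variable {X : Type*} [TopologicalSpace X]

/-- The unit `η : X → X̃`, `η x = cl {x}`. -/
def eta (x : X) : Xtilde X :=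
  ⟨closure {x}, fun _ hS => hS.2.1 x⟩

/-!
The Scott-open sets `Ũ = {B ∈ X̃ | B ∩ U ≠ ∅}`, for `U` open in `X`, pull back along `η` to `U`
itself, so every open set of `X` is open in the topology induced by `η`; and the closed sets `X̃ \ Ũ` separate
`η(A)` from `η(x)` for `x ∉ A` closed. Conversely, a directed set `D` converging to `x` has
`η(x) ≤ sup η(D) = cl D` in `X̃`, so the preimage of a Scott-open set is directed-open, hence open
when `X` is a directed space.
-/

lemma XtildeSet_subset : XtildeSet X ⊆ {A | IsClosed A ∧ A.Nonempty} := by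
  refine sInter_subset_of_mem ⟨subset_rfl, fun x => ⟨isClosed_closure, x, subset_closure rfl⟩, ?_⟩
  rintro 𝒟 h𝒟 ⟨D, hD⟩ -
  obtain ⟨z, hz⟩ := (h𝒟 hD).2
  exact ⟨isClosed_closure, z, subset_closure ⟨D, hD, hz⟩⟩

lemma closure_sUnion_mem_XtildeSet {𝒟 : Set (Set X)} (h𝒟 : 𝒟 ⊆ XtildeSet X)
    (hne : 𝒟.Nonempty) (hdir : DirectedOn (· ⊆ ·) 𝒟) : closure (⋃₀ 𝒟) ∈ XtildeSet X :=
  fun _ hS => hS.2.2 𝒟 (fun _ hD => h𝒟 hD _ hS) hne hdir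

instance : TopologicalSpace (Xtilde X) := scott (Xtilde X) univ

instance : IsScott (Xtilde X) univ := ⟨rfl⟩

namespace Xtilde

def dSup (d : Set (Xtilde X)) (hne : d.Nonempty) (hdir : DirectedOn (· ≤ ·) d) : Xtilde X :=
  ⟨closure (⋃₀ (Subtype.val '' d)), closure_sUnion_mem_XtildeSet
    (by rintro _ ⟨b, -, rfl⟩; exact b.2) (hne.image _) (hdir.mono_comp fun _ _ h => h)⟩

variable {d : Set (Xtilde X)} (hne : d.Nonempty) (hdir : DirectedOn (· ≤ ·) d)

lemma isLUB_dSup : IsLUB d (dSup d hne hdir) := by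
  refine ⟨fun b hb z hz => subset_closure ⟨b.1, ⟨b, hb, rfl⟩, hz⟩, fun u hu => ?_⟩
  refine closure_minimal ?_ (XtildeSet_subset u.2).1
  rintro z ⟨_, ⟨b, hb, rfl⟩, hz⟩
  exact hu hb hz

lemma eq_dSup_of_isLUB {a : Xtilde X} (ha : IsLUB d a) : a = dSup d hne hdir :=
  ha.unique (isLUB_dSup hne hdir)

end Xtilde

open Xtilde

lemma isOpen_setOf_inter_nonempty {U : Set X} (hU : IsOpen U) :
    IsOpen {B : Xtilde X | (B.1 ∩ U).Nonempty} := by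
  rw [IsScott.isOpen_iff_isUpperSet_and_dirSupInaccOn (D := univ)]
  refine ⟨fun a b hab ⟨z, hz, hzU⟩ => ⟨z, hab hz, hzU⟩, ?_⟩
  rintro d - hne hdir a ha ⟨z, hz, hzU⟩
  rw [eq_dSup_of_isLUB hne hdir ha] at hz
  obtain ⟨w, hwU, _, ⟨b, hb, rfl⟩, hwb⟩ := mem_closure_iff.1 hz U hU hzU
  exact ⟨b, hb, w, hwb, hwU⟩

lemma eta_preimage_setOf_inter_nonempty {U : Set X} (hU : IsOpen U) :
    eta ⁻¹' {B : Xtilde X | (B.1 ∩ U).Nonempty} = U := by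
  ext x
  refine ⟨fun ⟨y, hy, hyU⟩ => ?_, fun hx => ⟨x, subset_closure rfl, hx⟩⟩
  obtain ⟨_, hxU, rfl⟩ := mem_closure_iff.1 hy U hU hyU
  exact hxU

lemma dConv_iff_mem_closure {D : Set X} {x : X} : DConv D x ↔ x ∈ closure D := by
  simp only [DConv, mem_closure_iff, inter_comm D]

lemma eta_mono {x y : X} (h : specLe x y) : eta x ≤ eta y :=
  closure_minimal (singleton_subset_iff.2 h) isClosed_closure

lemma directedOn_image_eta {D : Set X} (hD : DirectedOn specLe D) :
    DirectedOn (· ≤ ·) (eta '' D) := by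
  rintro _ ⟨a, ha, rfl⟩ _ ⟨b, hb, rfl⟩
  obtain ⟨c, hc, hac, hbc⟩ := hD a ha b hb
  exact ⟨eta c, mem_image_of_mem _ hc, eta_mono hac, eta_mono hbc⟩

lemma dSup_image_eta {D : Set X} (hne : (eta '' D).Nonempty)
    (hdir : DirectedOn (· ≤ ·) (eta '' D)) : (dSup (eta '' D) hne hdir).1 = closure D := by
  refine subset_antisymm (closure_minimal ?_ isClosed_closure) (closure_mono ?_)
  · rintro z ⟨_, ⟨_, ⟨x, hx, rfl⟩, rfl⟩, hz⟩
    exact closure_mono (singleton_subset_iff.2 hx) hz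
  · exact fun x hx => ⟨closure {x}, ⟨eta x, mem_image_of_mem _ hx, rfl⟩, subset_closure rfl⟩

lemma dirOpen_eta_preimage {V : Set (Xtilde X)} (hV : IsOpen V) : DirOpen (eta ⁻¹' V) := by
  intro D x hDne hDdir hconv hxV
  have hne : (eta '' D).Nonempty := hDne.image _
  have hdir := directedOn_image_eta hDdir
  have hle : eta x ≤ dSup (eta '' D) hne hdir := by
    change closure {x} ⊆ _
    rw [dSup_image_eta]
    exact closure_minimal (singleton_subset_iff.2 (dConv_iff_mem_closure.1 hconv)) isClosed_closure
  have hsup : dSup (eta '' D) hne hdir ∈ V :=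
    IsScott.isUpperSet_of_isOpen (D := univ) hV hle hxV
  obtain ⟨_, ⟨y, hy, rfl⟩, hyV⟩ :=
    (IsScott.isOpen_iff_isUpperSet_and_dirSupInaccOn (D := univ)).1 hV |>.2
      (mem_univ _) hne hdir (isLUB_dSup hne hdir) hsup
  exact ⟨y, hy, hyV⟩

lemma eta_injective [T0Space X] : Function.Injective (eta : X → Xtilde X) :=
  fun _ _ h => (inseparable_iff_closure_eq.2 (congrArg Subtype.val h)).eq

lemma isEmbedding_eta [T0Space X] (hX : ∀ U : Set X, DirOpen U → IsOpen U) :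
    IsEmbedding (eta : X → Xtilde X) := by
  have hcont : Continuous (eta : X → Xtilde X) :=
    continuous_def.2 fun _ hV => hX _ (dirOpen_eta_preimage hV)
  refine ⟨⟨le_antisymm (continuous_iff_le_induced.1 hcont) ?_⟩, eta_injective⟩
  intro U hU
  rw [← eta_preimage_setOf_inter_nonempty hU]
  exact isOpen_induced (isOpen_setOf_inter_nonempty hU)

lemma eta_image_eq_range_inter_closure {A : Set X} (hA : IsClosed A) :
    eta '' A = range (eta : X → Xtilde X) ∩ closure (eta '' A) := by
  refine subset_antisymm (subset_inter (image_subset_range _ _) subset_closure) ?_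
  have hsep : closure (eta '' A) ⊆ {B : Xtilde X | (B.1 ∩ Aᶜ).Nonempty}ᶜ := by
    refine closure_minimal ?_ (isOpen_setOf_inter_nonempty hA.isOpen_compl).isClosed_compl
    rintro _ ⟨a, ha, rfl⟩ ⟨z, hz, hzA⟩
    exact hzA (closure_minimal (singleton_subset_iff.2 ha) hA hz)
  rintro _ ⟨⟨x, rfl⟩, hx⟩
  have hxA : x ∈ A := not_not.1 fun hxAc =>
    hsep hx ((eta_preimage_setOf_inter_nonempty hA.isOpen_compl).ge hxAc)
  exact mem_image_of_mem _ hxA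

/-- For a directed space `X`, `η : X → X̃` (with `X̃` carrying the Scott topology) is a
topological embedding, and for every closed `A ⊆ X`, `η(A) = η(X) ∩ cl_{X̃}(η(A))`. -/
theorem stmt_14 [T0Space X] (hX : ∀ U : Set X, DirOpen U → IsOpen U) :
    @Topology.IsEmbedding X (Xtilde X) _ (Topology.scott (Xtilde X) Set.univ)
      (eta : X → Xtilde X) ∧
    ∀ A : Set X, IsClosed A →
      eta '' A = Set.range (eta : X → Xtilde X) ∩
        @closure (Xtilde X) (Topology.scott (Xtilde X) Set.univ) (eta '' A) :=
  ⟨isEmbedding_eta hX, fun _ hA => eta_image_eq_range_inter_closure hA⟩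
end

section
/- Let L be a continuous dcpo and A, B nonempty Scott compact saturated subsets of L. Then A is way below B in Q(L) (ordered by reverse inclusion) if and only if there is a finite subset F of L with B ⊆ int(↑F) and ↑F ⊆ A. -/
/-
The family of upper sets `↑F`, with `F` finite and `B ⊆ int ↑F`, is directed and, since `L` is
continuous, has intersection `B`; so `A ≪ B` yields a member of it inside `A`. Conversely, the
Scott space of a continuous dcpo is sober, hence well-filtered (Hofmann–Mislove): a filtered
family of compact saturated sets whose intersection lies in the open set `int ↑F` has a member
inside it, hence inside `A`.
-/

open Set

variable {L : Type*} [CompletePartialOrder L] [TopologicalSpace L] [Topology.IsScott L Set.univ]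

/-- The way-below relation in the dcpo `L`. -/
def wayBelow (x y : L) : Prop :=
  ∀ d : Set L, d.Nonempty → DirectedOn (· ≤ ·) d → y ≤ sSup d → ∃ z ∈ d, x ≤ z

/-- `L` is a continuous dcpo: every element is the directed supremum of the elements
way below it. -/
def ContinuousDcpo (L : Type*) [CompletePartialOrder L] : Prop :=
  ∀ x : L, {y : L | wayBelow y x}.Nonempty ∧
    DirectedOn (· ≤ ·) {y : L | wayBelow y x} ∧ IsLUB {y : L | wayBelow y x} x

/-- `K` is saturated: it is the intersection of its open neighborhoods. -/
def Saturated (K : Set L) : Prop := K = ⋂₀ {U : Set L | IsOpen U ∧ K ⊆ U}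

/-- `Q(L)`: the nonempty Scott compact saturated subsets of `L`. -/
def QLset (L : Type*) [CompletePartialOrder L] [TopologicalSpace L] : Set (Set L) :=
  {K : Set L | K.Nonempty ∧ IsCompact K ∧ Saturated K}

/-- The way-below relation in `Q(L)` ordered by reverse inclusion (where directed suprema
are intersections): `A ≪ B` iff every directed family whose supremum is above `B`
contains an element above `A`. -/
def wayBelowQ (A B : Set L) : Prop :=
  ∀ 𝒢 ⊆ QLset L, 𝒢.Nonempty → DirectedOn (fun K K' : Set L => K' ⊆ K) 𝒢 →
    ⋂₀ 𝒢 ⊆ B → ∃ K ∈ 𝒢, K ⊆ A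

open Topology

section WellFiltered

variable {X : Type*} [TopologicalSpace X]

lemma IsCompact.elim_directedOn_sUnion {K : Set X} (hK : IsCompact K) {c : Set (Set X)}
    (hc : c.Nonempty) (hopen : ∀ W ∈ c, IsOpen W) (hdir : DirectedOn (· ⊆ ·) c)
    (hKc : K ⊆ ⋃₀ c) : ∃ W ∈ c, K ⊆ W := by
  have : Nonempty c := hc.to_subtype
  obtain ⟨⟨W, hW⟩, hKW⟩ := hK.elim_directed_cover (fun W : c => (W : Set X))
    (fun W => hopen W W.2) (by rwa [← sUnion_eq_iUnion]) hdir.directed_val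
  exact ⟨W, hW, hKW⟩

lemma isPreirreducible_compl_of_maximal {𝒢 : Set (Set X)}
    (hdir : DirectedOn (fun K K' : Set X => K' ⊆ K) 𝒢) {W : Set X}
    (hW : Maximal (fun W => IsOpen W ∧ ∀ K ∈ 𝒢, ¬K ⊆ W) W) : IsPreirreducible Wᶜ := by
  have hcover : ∀ V, IsOpen V → (Wᶜ ∩ V).Nonempty → ∃ K ∈ 𝒢, K ⊆ W ∪ V := by
    rintro V hV ⟨x, hxW, hxV⟩
    by_contra! h
    exact hxW (hW.2 ⟨hW.1.1.union hV, h⟩ subset_union_left (Or.inr hxV))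
  intro U V hU hV hUne hVne
  by_contra hUV
  obtain ⟨K₁, hK₁, hK₁W⟩ := hcover U hU hUne
  obtain ⟨K₂, hK₂, hK₂W⟩ := hcover V hV hVne
  obtain ⟨K, hK, hK₁K, hK₂K⟩ := hdir K₁ hK₁ K₂ hK₂
  refine hW.1.2 K hK fun x hx => by_contra fun hxW => hUV ⟨x, hxW, ?_, ?_⟩
  · exact (hK₁W (hK₁K hx)).resolve_left hxW
  · exact (hK₂W (hK₂K hx)).resolve_left hxW

/-- Hofmann–Mislove: quasi-sober spaces are well-filtered. -/
theorem QuasiSober.exists_mem_subset_of_sInter_subset [QuasiSober X] {𝒢 : Set (Set X)}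
    (hcompact : ∀ K ∈ 𝒢, IsCompact K) (hsat : ∀ K ∈ 𝒢, nhdsKer K ⊆ K) (hne : 𝒢.Nonempty)
    (hdir : DirectedOn (fun K K' : Set X => K' ⊆ K) 𝒢) {U : Set X} (hU : IsOpen U)
    (hsub : ⋂₀ 𝒢 ⊆ U) : ∃ K ∈ 𝒢, K ⊆ U := by
  by_contra! h
  set 𝒲 := {W | IsOpen W ∧ ∀ K ∈ 𝒢, ¬K ⊆ W}
  have hchains : ∀ c ⊆ 𝒲, IsChain (· ⊆ ·) c → c.Nonempty → ∃ W ∈ 𝒲, ∀ V ∈ c, V ⊆ W := by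
    refine fun c hc hchain hcne => ⟨⋃₀ c, ⟨isOpen_sUnion fun W hW => (hc hW).1, ?_⟩,
      fun _ => subset_sUnion_of_mem⟩
    intro K hK hKc
    obtain ⟨W, hWc, hKW⟩ := (hcompact K hK).elim_directedOn_sUnion hcne
      (fun W hW => (hc hW).1) hchain.directedOn hKc
    exact (hc hWc).2 K hK hKW
  obtain ⟨W, hUW, hW⟩ := zorn_subset_nonempty 𝒲 hchains U ⟨hU, h⟩
  obtain ⟨K₀, hK₀⟩ := hne
  have hirr : IsIrreducible Wᶜ := ⟨(not_subset.1 (hW.1.2 K₀ hK₀)).imp fun _ hk => hk.2,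
    isPreirreducible_compl_of_maximal hdir hW⟩
  obtain ⟨x, hx⟩ := QuasiSober.sober hirr hW.1.1.isClosed_compl
  have hxK : x ∈ ⋂₀ 𝒢 := fun K hK => by
    obtain ⟨k, hkK, hkW⟩ := not_subset.1 (hW.1.2 K hK)
    exact hsat K hK (mem_nhdsKer_iff_specializes.2 ⟨k, hkK, hx.specializes hkW⟩)
  exact hx.mem (hUW (hsub hxK))

lemma saturated_iff_nhdsKer_eq {K : Set X} : Saturated K ↔ nhdsKer K = K := by
  rw [Saturated, nhdsKer_def, eq_comm]

end WellFiltered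

section Scott

variable {α : Type*} [Preorder α] [TopologicalSpace α] [IsScott α univ]

lemma Topology.IsScott.specializes_iff_le {x y : α} : x ⤳ y ↔ y ≤ x := by
  rw [specializes_iff_mem_closure, IsScott.closure_singleton, mem_Iic]

lemma Topology.IsScott.nhdsKer_eq (s : Set α) : nhdsKer s = {x | ∃ a ∈ s, a ≤ x} := by
  ext x
  simp only [mem_nhdsKer_iff_specializes, IsScott.specializes_iff_le, mem_ofPred_eq]

end Scott

section Dcpo

variable {α : Type*} [CompletePartialOrder α]

lemma wayBelow.le {x y : α} (h : wayBelow x y) : x ≤ y := by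
  obtain ⟨z, rfl, hxz⟩ := h {y} (singleton_nonempty y) (directedOn_singleton y)
    ((CompletePartialOrder.lubOfDirected {y} (directedOn_singleton y)).1 rfl)
  exact hxz

lemma wayBelow.trans_le {x y z : α} (h : wayBelow x y) (hyz : y ≤ z) : wayBelow x z :=
  fun d hd hdir hzd => h d hd hdir (hyz.trans hzd)

lemma LE.le.trans_wayBelow {x y z : α} (hxy : x ≤ y) (h : wayBelow y z) : wayBelow x z :=
  fun d hd hdir hzd => (h d hd hdir hzd).imp fun _ ⟨hw, hyw⟩ => ⟨hw, hxy.trans hyw⟩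

theorem ContinuousDcpo.exists_between (hcont : ContinuousDcpo α) {w x : α}
    (hwx : wayBelow w x) :
    ∃ u, wayBelow w u ∧ wayBelow u x := by
  set E : Set α := {a | ∃ b, wayBelow a b ∧ wayBelow b x}
  obtain ⟨hne, hdir, hlub⟩ := hcont x
  have hEne : E.Nonempty := by
    obtain ⟨b, hb⟩ := hne
    obtain ⟨a, ha⟩ := (hcont b).1
    exact ⟨a, b, ha, hb⟩
  have hEdir : DirectedOn (· ≤ ·) E := by
    rintro a₁ ⟨b₁, hab₁, hbx₁⟩ a₂ ⟨b₂, hab₂, hbx₂⟩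
    obtain ⟨b, hb, hb₁, hb₂⟩ := hdir b₁ hbx₁ b₂ hbx₂
    obtain ⟨a, ha, ha₁, ha₂⟩ := (hcont b).2.1 a₁ (hab₁.trans_le hb₁) a₂ (hab₂.trans_le hb₂)
    exact ⟨a, ⟨b, ha, hb⟩, ha₁, ha₂⟩
  have hElub : IsLUB E x := by
    refine ⟨fun a ⟨b, hab, hbx⟩ => hab.le.trans hbx.le, fun u hu => hlub.2 fun b hbx => ?_⟩
    exact (hcont b).2.2.2 fun a hab => hu ⟨b, hab, hbx⟩
  obtain ⟨a, ⟨b, hab, hbx⟩, hwa⟩ :=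
    hwx E hEne hEdir (hElub.2 (CompletePartialOrder.lubOfDirected E hEdir).1)
  exact ⟨b, hwa.trans_wayBelow hab, hbx⟩

end Dcpo

namespace ContinuousDcpo

variable (hcont : ContinuousDcpo L)
include hcont

theorem isOpen_setOf_wayBelow (w : L) : IsOpen {y : L | wayBelow w y} := by
  rw [IsScott.isOpen_iff_isUpperSet_and_dirSupInaccOn (D := univ)]
  refine ⟨fun y z hyz hy => hy.trans_le hyz, fun d _ hd hdir a hlub ha => ?_⟩
  obtain ⟨u, hwu, hua⟩ := hcont.exists_between ha
  obtain ⟨z, hz, huz⟩ := hua d hd hdir (hlub.2 (CompletePartialOrder.lubOfDirected d hdir).1)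
  exact ⟨z, hz, hwu.trans_le huz⟩

theorem exists_wayBelow_mem {U : Set L} (hU : IsOpen U) {x : L} (hx : x ∈ U) :
    ∃ w ∈ U, wayBelow w x := by
  obtain ⟨hne, hdir, hlub⟩ := hcont x
  rw [IsScott.isOpen_iff_isUpperSet_and_dirSupInaccOn (D := univ)] at hU
  obtain ⟨w, hwx, hwU⟩ := hU.2 (mem_univ _) hne hdir hlub hx
  exact ⟨w, hwU, hwx⟩

theorem exists_finset_subset_interior_nhdsKer {K U : Set L} (hK : IsCompact K) (hU : IsOpen U)
    (hKU : K ⊆ U) :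
    ∃ F : Finset L, nhdsKer (F : Set L) ⊆ U ∧ K ⊆ interior (nhdsKer (F : Set L)) := by
  have hcover : K ⊆ ⋃ w ∈ U, {y | wayBelow w y} := fun k hk =>
    let ⟨w, hwU, hwk⟩ := exists_wayBelow_mem hcont hU (hKU hk)
    mem_biUnion hwU hwk
  obtain ⟨t, htU, htfin, hKt⟩ :=
    hK.elim_finite_subcover_image (fun w _ => isOpen_setOf_wayBelow hcont w) hcover
  refine ⟨htfin.toFinset, by simpa [hU.nhdsKer_subset] using htU, hKt.trans ?_⟩
  refine interior_maximal (iUnion₂_subset fun w hw y hy => ?_)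
    (isOpen_biUnion fun w _ => isOpen_setOf_wayBelow hcont w)
  rw [IsScott.nhdsKer_eq]
  exact ⟨w, by simpa using hw, wayBelow.le hy⟩

theorem quasiSober : QuasiSober L where
  sober {C} hirr hC := by
    set D : Set L := {v | ∃ c ∈ C, wayBelow v c}
    have hDne : D.Nonempty := by
      obtain ⟨c, hc⟩ := hirr.nonempty
      obtain ⟨v, hv⟩ := (hcont c).1
      exact ⟨v, c, hc, hv⟩
    have hDdir : DirectedOn (· ≤ ·) D := by
      rintro v₁ ⟨c₁, hc₁, hv₁⟩ v₂ ⟨c₂, hc₂, hv₂⟩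
      obtain ⟨c, hc, hvc₁, hvc₂⟩ := hirr.2 _ _ (isOpen_setOf_wayBelow hcont v₁)
        (isOpen_setOf_wayBelow hcont v₂) ⟨c₁, hc₁, hv₁⟩ ⟨c₂, hc₂, hv₂⟩
      obtain ⟨v, hv, hv₁v, hv₂v⟩ := (hcont c).2.1 v₁ hvc₁ v₂ hvc₂
      exact ⟨v, ⟨c, hc, hv⟩, hv₁v, hv₂v⟩
    have hlub := CompletePartialOrder.lubOfDirected D hDdir
    have hClower := IsScott.isLowerSet_of_isClosed hC
    have hsup : sSup D ∈ C := IsScott.dirSupClosed_of_isClosed hC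
      (by rintro v ⟨c, hc, hvc⟩; exact hClower hvc.le hc) hDne hDdir hlub
    refine ⟨sSup D, ?_⟩
    rw [isGenericPoint_def, IsScott.closure_singleton]
    exact subset_antisymm (fun y hy => hClower hy hsup)
      fun c hc => (hcont c).2.2.2 fun v hv => hlub.1 ⟨c, hc, hv⟩

end ContinuousDcpo

section FiniteUpperNhds

variable {P : Type*} [CompletePartialOrder P] [TopologicalSpace P]

/-- The sets `↑F`, written `nhdsKer F` (see `IsScott.nhdsKer_eq`), with `F` finite and
`B ⊆ int ↑F`. -/
def finiteUpperNhds (B : Set P) : Set (Set P) :=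
  {S | ∃ F : Finset P, S = nhdsKer (F : Set P) ∧ B ⊆ interior S}

lemma finiteUpperNhds_subset_QLset {B : Set P} (hB : B.Nonempty) :
    finiteUpperNhds B ⊆ QLset P := by
  rintro S ⟨F, rfl, hBS⟩
  exact ⟨hB.mono (hBS.trans interior_subset), F.finite_toSet.isCompact.nhdsKer,
    saturated_iff_nhdsKer_eq.2 (nhdsKer_nhdsKer _)⟩

end FiniteUpperNhds

lemma wayBelowQ_of_isOpen (hcont : ContinuousDcpo L) {A B U : Set L} (hU : IsOpen U)
    (hBU : B ⊆ U) (hUA : U ⊆ A) : wayBelowQ A B := by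
  intro 𝒢 h𝒢 hne hdir hsub
  have := hcont.quasiSober
  obtain ⟨K, hK, hKU⟩ := QuasiSober.exists_mem_subset_of_sInter_subset
    (fun K hK => (h𝒢 hK).2.1) (fun K hK => (saturated_iff_nhdsKer_eq.1 (h𝒢 hK).2.2).le)
    hne hdir hU (hsub.trans hBU)
  exact ⟨K, hK, hKU.trans hUA⟩

lemma directedOn_finiteUpperNhds (hcont : ContinuousDcpo L) {B : Set L} (hB : IsCompact B) :
    DirectedOn (fun K K' : Set L => K' ⊆ K) (finiteUpperNhds B) := by
  rintro _ ⟨F₁, rfl, hB₁⟩ _ ⟨F₂, rfl, hB₂⟩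
  obtain ⟨F, hF, hBF⟩ := hcont.exists_finset_subset_interior_nhdsKer hB
    (isOpen_interior.inter isOpen_interior) (subset_inter hB₁ hB₂)
  exact ⟨_, ⟨F, rfl, hBF⟩, hF.trans (inter_subset_left.trans interior_subset),
    hF.trans (inter_subset_right.trans interior_subset)⟩

lemma sInter_finiteUpperNhds_subset (hcont : ContinuousDcpo L) {B : Set L}
    (hB : IsCompact B) :
    ⋂₀ finiteUpperNhds B ⊆ nhdsKer B := by
  refine subset_nhdsKer_iff.2 fun U hU hBU => ?_
  obtain ⟨F, hFU, hBF⟩ := hcont.exists_finset_subset_interior_nhdsKer hB hU hBU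
  have hF : nhdsKer (F : Set L) ∈ finiteUpperNhds B := ⟨F, rfl, hBF⟩
  exact (sInter_subset_of_mem hF).trans hFU

lemma exists_finset_of_wayBelowQ (hcont : ContinuousDcpo L) {A B : Set L} (hB : B ∈ QLset L)
    (h : wayBelowQ A B) :
    ∃ F : Finset L, B ⊆ interior (nhdsKer (F : Set L)) ∧ nhdsKer (F : Set L) ⊆ A := by
  obtain ⟨hBne, hBc, hBsat⟩ := hB
  obtain ⟨F, -, hBF⟩ :=
    hcont.exists_finset_subset_interior_nhdsKer hBc isOpen_univ (subset_univ B)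
  obtain ⟨_, ⟨F, rfl, hBF⟩, hFA⟩ := h _ (finiteUpperNhds_subset_QLset hBne) ⟨_, F, rfl, hBF⟩
    (directedOn_finiteUpperNhds hcont hBc)
    ((sInter_finiteUpperNhds_subset hcont hBc).trans (saturated_iff_nhdsKer_eq.1 hBsat).le)
  exact ⟨F, hBF, hFA⟩

theorem stmt_18_general (hcont : ContinuousDcpo L) (A B : Set L)
    (hB : B ∈ QLset L) :
    wayBelowQ A B ↔ ∃ F : Finset L,
      B ⊆ interior {x : L | ∃ a ∈ F, a ≤ x} ∧ {x : L | ∃ a ∈ F, a ≤ x} ⊆ A := by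
  have hupper : ∀ F : Finset L, {x : L | ∃ a ∈ F, a ≤ x} = nhdsKer (F : Set L) :=
    fun F => (IsScott.nhdsKer_eq _).symm
  simp_rw [hupper]
  exact ⟨exists_finset_of_wayBelowQ hcont hB, fun ⟨F, hBF, hFA⟩ =>
    wayBelowQ_of_isOpen hcont isOpen_interior hBF (interior_subset.trans hFA)⟩

/-- In `Q(L)` over a continuous dcpo `L`, `A ≪ B` iff there is a finite `F ⊆ L` with
`B ⊆ int(↑F)` and `↑F ⊆ A`. -/
theorem stmt_18 (hcont : ContinuousDcpo L) (A B : Set L)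
    (hA : A ∈ QLset L) (hB : B ∈ QLset L) :
    wayBelowQ A B ↔ ∃ F : Finset L,
      B ⊆ interior {x : L | ∃ a ∈ F, a ≤ x} ∧ {x : L | ∃ a ∈ F, a ≤ x} ⊆ A :=
  stmt_18_general hcont A B hB
end
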